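/- arXiv:2203.16808 — 3 statements merged into one kernel-verified Lean document; each statement's English description precedes it below -/
import Mathlib

section
/- Let c : ℝ³ → ℝ be C¹ with a unique critical point p* (∇c(p) = 0 ⟺ p = p*). Suppose (p(t), Q(t)) is a C¹ trajectory of ṗ = Qe₁e₁ᵀQᵀ∇c(p), Q̇ = (1/4)Q((Qᵀ∇c(p))×e₁)^ on ℝ³×SO(3) satisfying ∇c(p(t))ᵀ Q(t)e₁ = 0 for all t in an interval I. Then p(t) = p* for all t ∈ I. -/
/-!
On the invariant set the constraint `∇c(p) ⬝ Q e₁ = 0` kills `ṗ = (Q e₁ ⬝ ∇c(p)) Q e₁`, so `p` is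
frozen and `g = ∇c(p)` is constant. Differentiating the constraint then only sees `Q̇`, and by the
triple-product expansion with `u = Qᵀ g ⊥ e₁` the derivative is `-(1/4) ‖u‖² = -(1/4) ‖g‖²`.
It must vanish, so `g = 0` and `p` is the critical point.
-/

open Matrix

section Algebra

variable {m n R : Type*} [Fintype m] [Fintype n] [CommRing R]

theorem mul_vecMulVec_mul_transpose_mulVec (A B : Matrix m n R) (x y : n → R) (v : m → R) :
    (A * vecMulVec x y * Bᵀ) *ᵥ v = ((B *ᵥ y) ⬝ᵥ v) • (A *ᵥ x) := by
  rw [← mulVec_mulVec, ← mulVec_mulVec, vecMulVec_mulVec, op_smul_eq_smul, mulVec_smul,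
    mulVec_transpose, dotProduct_comm, ← dotProduct_mulVec, dotProduct_comm]

theorem dotProduct_cross_cross_self (u e : Fin 3 → R) :
    u ⬝ᵥ (u ⨯₃ e ⨯₃ e) = (u ⬝ᵥ e) ^ 2 - (e ⬝ᵥ e) * (u ⬝ᵥ u) := by
  rw [cross_cross_eq_smul_sub_smul, dotProduct_sub, dotProduct_smul, dotProduct_smul,
    smul_eq_mul, smul_eq_mul]
  ring

theorem dotProduct_mulVec_cross_cross_of_transpose_mul_self {Q : Matrix (Fin 3) (Fin 3) R}
    (hQ : Qᵀ * Q = 1) (g e : Fin 3 → R) :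
    g ⬝ᵥ Q *ᵥ ((Qᵀ *ᵥ g) ⨯₃ e ⨯₃ e) = (g ⬝ᵥ Q *ᵥ e) ^ 2 - (e ⬝ᵥ e) * (g ⬝ᵥ g) := by
  have hdot : ∀ w, g ⬝ᵥ Q *ᵥ w = (Qᵀ *ᵥ g) ⬝ᵥ w := fun w => by
    rw [dotProduct_mulVec, mulVec_transpose]
  have hnorm : (Qᵀ *ᵥ g) ⬝ᵥ (Qᵀ *ᵥ g) = g ⬝ᵥ g := by
    rw [← hdot, mulVec_mulVec, mul_eq_one_comm.mp hQ, one_mulVec]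
  rw [hdot, hdot, dotProduct_cross_cross_self, hnorm]

end Algebra

theorem HasDerivAt.dotProduct_mulVec {𝕜 m n : Type*} [NontriviallyNormedField 𝕜]
    [Fintype m] [Fintype n] {Q : 𝕜 → Matrix m n 𝕜} {Q' : Matrix m n 𝕜} {t : 𝕜} (hQ : HasDerivAt Q Q' t)
    (g : m → 𝕜) (v : n → 𝕜) :
    HasDerivAt (fun s => g ⬝ᵥ Q s *ᵥ v) (g ⬝ᵥ Q' *ᵥ v) t := by
  simp only [dotProduct, mulVec]
  exact HasDerivAt.fun_sum fun i _ => HasDerivAt.const_mul _ <|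
    HasDerivAt.fun_sum fun j _ => (hasDerivAt_pi.1 (hasDerivAt_pi.1 hQ i) j).mul_const _

theorem lasalle_invariant_set_general
    (hat : (Fin 3 → ℝ) → Matrix (Fin 3) (Fin 3) ℝ)
    (hhat : ∀ v w : Fin 3 → ℝ, (hat v).mulVec w = v ⨯₃ w)
    (gradc : (Fin 3 → ℝ) → Fin 3 → ℝ)
    (pstar : Fin 3 → ℝ) (hcrit : ∀ x : Fin 3 → ℝ, gradc x = 0 ↔ x = pstar)
    (a b : ℝ)
    (p : ℝ → Fin 3 → ℝ) (Q : ℝ → Matrix (Fin 3) (Fin 3) ℝ)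
    (hSO : ∀ t ∈ Set.Ioo a b, (Q t)ᵀ * Q t = 1 ∧ (Q t).det = 1)
    (hp : ∀ t ∈ Set.Ioo a b, HasDerivAt p
      ((Q t * vecMulVec (![1,0,0] : Fin 3 → ℝ) (![1,0,0] : Fin 3 → ℝ) * (Q t)ᵀ).mulVec
        (gradc (p t))) t)
    (hQd : ∀ t ∈ Set.Ioo a b, HasDerivAt Q
      ((1/4 : ℝ) • (Q t * hat (((Q t)ᵀ.mulVec (gradc (p t))) ⨯₃ ![1,0,0]))) t)
    (hinv : ∀ t ∈ Set.Ioo a b, gradc (p t) ⬝ᵥ (Q t).mulVec ![1,0,0] = 0) :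
    ∀ t ∈ Set.Ioo a b, p t = pstar := by
  intro t ht
  have hp_stat : ∀ s ∈ Set.Ioo a b, HasDerivAt p 0 s := fun s hs => by
    simpa only [mul_vecMulVec_mul_transpose_mulVec, dotProduct_comm _ (gradc (p s)), hinv s hs,
      zero_smul] using hp s hs
  have hp_const : ∀ s ∈ Set.Ioo a b, p s = p t := fun s hs =>
    isOpen_Ioo.is_const_of_deriv_eq_zero isPreconnected_Ioo
      (fun x hx => (hp_stat x hx).differentiableAt.differentiableWithinAt)
      (fun x hx => (hp_stat x hx).deriv) hs ht
  set g := gradc (p t)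
  have hflat : HasDerivAt (fun s => g ⬝ᵥ Q s *ᵥ ![1, 0, 0]) 0 t := by
    refine (hasDerivAt_const t 0).congr_of_eventuallyEq ?_
    filter_upwards [isOpen_Ioo.mem_nhds ht] with s hs
    simpa only [hp_const s hs] using hinv s hs
  have he₁ : (![1, 0, 0] : Fin 3 → ℝ) ⬝ᵥ ![1, 0, 0] = 1 := by simp
  have hderiv := hflat.unique ((hQd t ht).dotProduct_mulVec g ![1, 0, 0])
  rw [smul_mulVec, ← mulVec_mulVec, hhat, dotProduct_smul,
    dotProduct_mulVec_cross_cross_of_transpose_mul_self (hSO t ht).1, hinv t ht, he₁,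
    smul_eq_mul] at hderiv
  exact (hcrit (p t)).mp (dotProduct_self_eq_zero.mp (by linarith))

/-- LaSalle invariant-set computation: if a trajectory of
`ṗ = Q e₁e₁ᵀ Qᵀ ∇c(p)`, `Q̇ = (1/4) Q ((Qᵀ∇c(p)) × e₁)^` on `ℝ³ × SO(3)` satisfies
`∇c(p(t))ᵀ Q(t) e₁ = 0` on an interval `I`, and `c` has a unique critical point `p*`,
then `p(t) = p*` on `I`. -/
theorem lasalle_invariant_set
    (hat : (Fin 3 → ℝ) → Matrix (Fin 3) (Fin 3) ℝ)
    (hhat : ∀ v w : Fin 3 → ℝ, (hat v).mulVec w = v ⨯₃ w)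
    (c : (Fin 3 → ℝ) → ℝ) (hc : ContDiff ℝ 1 c)
    (gradc : (Fin 3 → ℝ) → Fin 3 → ℝ)
    (hgrad : ∀ (x v : Fin 3 → ℝ), fderiv ℝ c x v = gradc x ⬝ᵥ v)
    (pstar : Fin 3 → ℝ) (hcrit : ∀ x : Fin 3 → ℝ, gradc x = 0 ↔ x = pstar)
    (a b : ℝ)
    (p : ℝ → Fin 3 → ℝ) (Q : ℝ → Matrix (Fin 3) (Fin 3) ℝ)
    (hSO : ∀ t ∈ Set.Ioo a b, (Q t)ᵀ * Q t = 1 ∧ (Q t).det = 1)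
    (hp : ∀ t ∈ Set.Ioo a b, HasDerivAt p
      ((Q t * vecMulVec (![1,0,0] : Fin 3 → ℝ) (![1,0,0] : Fin 3 → ℝ) * (Q t)ᵀ).mulVec
        (gradc (p t))) t)
    (hQd : ∀ t ∈ Set.Ioo a b, HasDerivAt Q
      ((1/4 : ℝ) • (Q t * hat (((Q t)ᵀ.mulVec (gradc (p t))) ⨯₃ ![1,0,0]))) t)
    (hinv : ∀ t ∈ Set.Ioo a b, gradc (p t) ⬝ᵥ (Q t).mulVec ![1,0,0] = 0) :
    ∀ t ∈ Set.Ioo a b, p t = pstar :=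
  lasalle_invariant_set_general hat hhat gradc pstar hcrit a b p Q hSO hp hQd hinv
end

section
/- Let c : ℝ³ → ℝ be C³, radially unbounded, with unique critical point p* which is the global maximum, satisfying c(p*) − c(p) ≤ κ‖∇c(p)‖² for all p and some κ > 0. Then the set S = {p*} × SO(3) is globally asymptotically stable for the system ṗ = Qe₁e₁ᵀQᵀ∇c(p), Q̇ = (1/4)Q((Qᵀ∇c(p))×e₁)^ on ℝ³ × SO(3). -/
/-!
Along a solution `Q` stays orthogonal: for `Q̇ = Q S` with `S` skew, `d/dt (Q Qᵀ) = 0`.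
With the heading `u = Q e₁` and the alignment `a = ∇c(p) ⬝ u` one gets `ṗ = a u`, hence
`V = c(p*) − c(p)` has `V̇ = −a²`, and `u̇ = (a u − ∇c(p)) / 4` gives
`ȧ = a (D∇c(p) u ⬝ u) + (a² − |∇c(p)|²) / 4`. The sublevel sets of `V` are compact, so the
trajectory and all these quantities stay bounded. If `V(p(t))` stayed above some `m > 0`, then
`|∇c(p(t))|² ≥ P > 0` (the only critical point is `p*`), and, with `B` a bound for
`D∇c(p) u ⬝ u`, `W = P a + (P/4 + 2B²) V` would decrease at the uniform rate `P²/8` while being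
bounded below. So `V(p(t))` gets arbitrarily small, and since it is nonincreasing and `V` is
proper, `p(t) → p*`; the same two facts give stability.
-/

open Matrix Filter

attribute [local instance] Matrix.normedAddCommGroup Matrix.normedSpace

/-- Solutions (for `t ≥ 0`) of the reduced order averaged source-seeking system
`ṗ = Q e₁e₁ᵀ Qᵀ ∇c(p)`, `Q̇ = (1/4) Q ((Qᵀ∇c(p)) × e₁)^` starting on `ℝ³ × SO(3)`. -/
def IsAvgSolution (hat : (Fin 3 → ℝ) → Matrix (Fin 3) (Fin 3) ℝ)
    (gradc : (Fin 3 → ℝ) → Fin 3 → ℝ)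
    (p : ℝ → Fin 3 → ℝ) (Q : ℝ → Matrix (Fin 3) (Fin 3) ℝ) : Prop :=
  ((Q 0)ᵀ * Q 0 = 1 ∧ (Q 0).det = 1) ∧
  (∀ t : ℝ, 0 ≤ t → HasDerivAt p
      ((Q t * vecMulVec (![1,0,0] : Fin 3 → ℝ) (![1,0,0] : Fin 3 → ℝ) * (Q t)ᵀ).mulVec
        (gradc (p t))) t) ∧
  (∀ t : ℝ, 0 ≤ t → HasDerivAt Q
      ((1/4 : ℝ) • (Q t * hat (((Q t)ᵀ.mulVec (gradc (p t))) ⨯₃ ![1,0,0]))) t)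

section Calculus

variable {ι l m n : Type*}

theorem HasDerivAt.dotProduct [Fintype ι] {f g : ℝ → ι → ℝ} {f' g' : ι → ℝ} {t : ℝ}
    (hf : HasDerivAt f f' t) (hg : HasDerivAt g g' t) :
    HasDerivAt (fun s => f s ⬝ᵥ g s) (f' ⬝ᵥ g t + f t ⬝ᵥ g') t := by
  simp only [_root_.dotProduct, ← Finset.sum_add_distrib]
  exact HasDerivAt.fun_sum fun i _ => (hasDerivAt_pi.1 hf i).mul (hasDerivAt_pi.1 hg i)

theorem hasDerivAt_matrix_iff [Fintype n] {A : ℝ → Matrix m n ℝ} {A' : Matrix m n ℝ} {t : ℝ} :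
    HasDerivAt A A' t ↔ ∀ i j, HasDerivAt (fun s => A s i j) (A' i j) t :=
  hasDerivAt_pi.trans (forall_congr' fun _ => hasDerivAt_pi)

theorem HasDerivAt.matrix_mul [Fintype m] [Fintype n] {A : ℝ → Matrix l m ℝ} {B : ℝ → Matrix m n ℝ}
    {A' : Matrix l m ℝ} {B' : Matrix m n ℝ} {t : ℝ}
    (hA : HasDerivAt A A' t) (hB : HasDerivAt B B' t) :
    HasDerivAt (fun s => A s * B s) (A' * B t + A t * B') t := by
  refine hasDerivAt_matrix_iff.2 fun i j => ?_
  simp only [Matrix.add_apply, Matrix.mul_apply, ← Finset.sum_add_distrib]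
  exact HasDerivAt.fun_sum fun k _ =>
    (hasDerivAt_matrix_iff.1 hA i k).mul (hasDerivAt_matrix_iff.1 hB k j)

theorem HasDerivAt.matrix_transpose [Fintype m] [Fintype n] {A : ℝ → Matrix n m ℝ}
    {A' : Matrix n m ℝ} {t : ℝ}
    (hA : HasDerivAt A A' t) : HasDerivAt (fun s => (A s)ᵀ) A'ᵀ t :=
  hasDerivAt_matrix_iff.2 fun i j => hasDerivAt_matrix_iff.1 hA j i

theorem HasDerivAt.matrix_mulVec_const [Fintype m] {A : ℝ → Matrix n m ℝ} {A' : Matrix n m ℝ}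
    {t : ℝ}
    (hA : HasDerivAt A A' t) (v : m → ℝ) : HasDerivAt (fun s => A s *ᵥ v) (A' *ᵥ v) t := by
  refine hasDerivAt_pi.2 fun i => ?_
  simpa [Matrix.mulVec] using (hasDerivAt_pi.1 hA i).dotProduct (hasDerivAt_const t v)

theorem sub_le_mul_sub_of_hasDerivAt_le {f f' : ℝ → ℝ} {a C : ℝ}
    (hf : ∀ t, a ≤ t → HasDerivAt f (f' t) t) (hf' : ∀ t, a ≤ t → f' t ≤ C)
    {s t : ℝ} (hs : a ≤ s) (hst : s ≤ t) : f t - f s ≤ C * (t - s) := by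
  refine (convex_Ici a).image_sub_le_mul_sub_of_deriv_le
    (fun x hx => (hf x hx).continuousAt.continuousWithinAt) (fun x hx => ?_) (fun x hx => ?_)
    s hs t (hs.trans hst) hst <;> rw [interior_Ici] at hx
  · exact (hf x (le_of_lt hx)).differentiableAt.differentiableWithinAt
  · exact (hf x (le_of_lt hx)).deriv ▸ hf' x (le_of_lt hx)

theorem mul_transpose_self_eq_of_hasDerivAt [Fintype n] {Q S : ℝ → Matrix n n ℝ} {a : ℝ}
    (hQ : ∀ t, a ≤ t → HasDerivAt Q (Q t * S t) t) (hS : ∀ t, a ≤ t → (S t)ᵀ = -S t)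
    {t : ℝ} (ht : a ≤ t) : Q t * (Q t)ᵀ = Q a * (Q a)ᵀ := by
  have hderiv : ∀ s, a ≤ s → HasDerivAt (fun s => Q s * (Q s)ᵀ) 0 s := fun s hs => by
    convert (hQ s hs).matrix_mul (hQ s hs).matrix_transpose using 1
    rw [Matrix.transpose_mul, hS s hs, Matrix.neg_mul, Matrix.mul_neg, ← Matrix.mul_assoc,
      add_neg_cancel]
  exact constant_of_has_deriv_right_zero
    (fun s hs => (hderiv s hs.1).continuousAt.continuousWithinAt)
    (fun s hs => (hderiv s hs.1).hasDerivWithinAt) t ⟨ht, le_rfl⟩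

end Calculus

section Lyapunov

variable {X : Type*} [TopologicalSpace X] {V : X → ℝ}

theorem isCompact_sublevel_of_tendsto_cocompact (hV : Continuous V)
    (hproper : Tendsto V (cocompact X) atTop) (C : ℝ) : IsCompact {x | V x ≤ C} := by
  obtain ⟨K, hK, hKV⟩ := mem_cocompact.1 (hproper.eventually_gt_atTop C)
  exact hK.of_isClosed_subset (isClosed_le hV continuous_const) fun x hx =>
    by_contra fun hxK => (hKV hxK).not_ge (show V x ≤ C from hx)

theorem exists_pos_sublevel_subset {x₀ : X} (hV : Continuous V)
    (hproper : Tendsto V (cocompact X) atTop) (hpos : ∀ x, x ≠ x₀ → 0 < V x)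
    {U : Set X} (hU : U ∈ nhds x₀) : ∃ m > 0, ∀ x, V x < m → x ∈ U := by
  have hcompact : IsCompact ({x | V x ≤ 1} \ interior U) :=
    (isCompact_sublevel_of_tendsto_cocompact hV hproper 1).diff isOpen_interior
  obtain ⟨m, hm, hmV⟩ := hcompact.exists_forall_le' hV.continuousOn fun x hx =>
    hpos x fun h => hx.2 (h ▸ mem_interior_iff_mem_nhds.2 hU)
  refine ⟨min m 1, lt_min hm one_pos, fun x hx => interior_subset ?_⟩
  by_contra hxU
  exact (hmV x ⟨(hx.trans_le (min_le_right _ _)).le, hxU⟩).not_gt (hx.trans_le (min_le_left _ _))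

end Lyapunov

theorem exists_lt_of_hasDerivAt_neg_sq {V a β G : ℝ → ℝ} {A B P : ℝ} (hP : 0 < P)
    (hV : ∀ t, 0 ≤ t → HasDerivAt V (-a t ^ 2) t)
    (ha : ∀ t, 0 ≤ t → HasDerivAt a (a t * β t + (a t ^ 2 - G t) / 4) t)
    (hV_nonneg : ∀ t, 0 ≤ t → 0 ≤ V t) (ha_ge : ∀ t, 0 ≤ t → -A ≤ a t)
    (hβ : ∀ t, 0 ≤ t → |β t| ≤ B) :
    ∃ t, 0 ≤ t ∧ G t < P := by
  by_contra! hG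
  -- The `2 B²` in `W` absorbs the cross term `P a β`: `2 B² a² - P B |a| + P² / 8 ≥ 0`.
  set W : ℝ → ℝ := fun t => P * a t + (P / 4 + 2 * B ^ 2) * V t
  have hW : ∀ t, 0 ≤ t → HasDerivAt W (P * (a t * β t + (a t ^ 2 - G t) / 4)
      + (P / 4 + 2 * B ^ 2) * -a t ^ 2) t := fun t ht =>
    ((ha t ht).const_mul P).add ((hV t ht).const_mul _)
  have hW' : ∀ t, 0 ≤ t → P * (a t * β t + (a t ^ 2 - G t) / 4)
      + (P / 4 + 2 * B ^ 2) * -a t ^ 2 ≤ -(P ^ 2 / 8) := fun t ht => by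
    have hβa : a t * β t ≤ |a t| * B := (le_abs_self _).trans <|
      abs_mul (a t) (β t) ▸ mul_le_mul_of_nonneg_left (hβ t ht) (abs_nonneg _)
    nlinarith [hG t ht, sq_abs (a t), sq_nonneg (B * |a t| - P / 4)]
  have hW_ge : ∀ t, 0 ≤ t → -(P * A) ≤ W t := fun t ht => by
    have := mul_nonneg (by positivity : 0 ≤ P / 4 + 2 * B ^ 2) (hV_nonneg t ht)
    show -(P * A) ≤ P * a t + (P / 4 + 2 * B ^ 2) * V t
    nlinarith [mul_le_mul_of_nonneg_left (ha_ge t ht) hP.le]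
  have hT : 0 ≤ 8 * (W 0 + P * A + 1) / P ^ 2 :=
    div_nonneg (by linarith [hW_ge 0 le_rfl]) (by positivity)
  have hdecay := sub_le_mul_sub_of_hasDerivAt_le hW hW' le_rfl hT
  have hPT : P ^ 2 / 8 * (8 * (W 0 + P * A + 1) / P ^ 2 - 0) = W 0 + P * A + 1 := by
    rw [sub_zero]; field_simp
  linarith [hW_ge _ hT]

section Gradient

variable {ι : Type*} [Fintype ι] {c : (ι → ℝ) → ℝ} {gradc : (ι → ℝ) → ι → ℝ}

theorem gradient_eq_zero_of_isLocalMax (hgrad : ∀ x v, fderiv ℝ c x v = gradc x ⬝ᵥ v)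
    {x : ι → ℝ} (hx : IsLocalMax c x) : gradc x = 0 := by
  have := hgrad x (gradc x)
  rw [hx.fderiv_eq_zero] at this
  exact dotProduct_self_eq_zero.1 this.symm

theorem contDiff_gradient [DecidableEq ι] {n : WithTop ℕ∞} (hc : ContDiff ℝ (n + 1) c)
    (hgrad : ∀ x v, fderiv ℝ c x v = gradc x ⬝ᵥ v) : ContDiff ℝ n gradc := by
  have hgradc : gradc = fun x i => fderiv ℝ c x (Pi.single i 1) := by
    funext x i
    rw [hgrad, dotProduct_single, mul_one]
  rw [hgradc]
  refine contDiff_pi.2 fun i => ?_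
  exact (ContinuousLinearMap.apply ℝ ℝ (Pi.single i (1 : ℝ))).contDiff.comp
    (hc.fderiv_right le_rfl)

end Gradient

theorem hat_transpose {hat : (Fin 3 → ℝ) → Matrix (Fin 3) (Fin 3) ℝ}
    (hhat : ∀ v w, hat v *ᵥ w = v ⨯₃ w) (v : Fin 3 → ℝ) : (hat v)ᵀ = -hat v := by
  have hentry : ∀ i j, hat v i j = (v ⨯₃ Pi.single j 1) i := fun i j => by
    simpa using congrFun (hhat v (Pi.single j 1)) i
  ext i j
  rw [transpose_apply, Matrix.neg_apply, hentry, hentry]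
  fin_cases i <;> fin_cases j <;> simp [cross_apply]

theorem mulVec_cross_cross_of_mul_transpose_eq_one {R : Type*} [CommRing R]
    {Q : Matrix (Fin 3) (Fin 3) R} (hQ : Q * Qᵀ = 1) (g e : Fin 3 → R) :
    Q *ᵥ ((Qᵀ *ᵥ g) ⨯₃ e ⨯₃ e) = (g ⬝ᵥ Q *ᵥ e) • Q *ᵥ e - (e ⬝ᵥ e) • g := by
  rw [cross_cross_eq_smul_sub_smul, mulVec_sub, mulVec_smul, mulVec_smul, mulVec_mulVec, hQ,
    one_mulVec, mulVec_transpose, ← dotProduct_mulVec]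

section Solution

local notation "e₁" => (![1, 0, 0] : Fin 3 → ℝ)

variable {hat : (Fin 3 → ℝ) → Matrix (Fin 3) (Fin 3) ℝ} {c : (Fin 3 → ℝ) → ℝ}
  {gradc : (Fin 3 → ℝ) → Fin 3 → ℝ} {p : ℝ → Fin 3 → ℝ} {Q : ℝ → Matrix (Fin 3) (Fin 3) ℝ} {t : ℝ}

namespace IsAvgSolution

theorem hasDerivAt_position (h : IsAvgSolution hat gradc p Q) (ht : 0 ≤ t) :
    HasDerivAt p ((gradc (p t) ⬝ᵥ Q t *ᵥ e₁) • Q t *ᵥ e₁) t := by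
  convert h.2.1 t ht using 1
  rw [mul_vecMulVec, vecMulVec_mul, vecMulVec_mulVec, vecMul_transpose, op_smul_eq_smul,
    dotProduct_comm]

theorem mul_transpose_self (hhat : ∀ v w, hat v *ᵥ w = v ⨯₃ w)
    (h : IsAvgSolution hat gradc p Q) (ht : 0 ≤ t) : Q t * (Q t)ᵀ = 1 := by
  rw [mul_transpose_self_eq_of_hasDerivAt
    (S := fun s => (1 / 4 : ℝ) • hat (((Q s)ᵀ *ᵥ gradc (p s)) ⨯₃ e₁))
    (fun s hs => by simpa only [Matrix.mul_smul] using h.2.2 s hs)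
    (fun s _ => by rw [transpose_smul, hat_transpose hhat, smul_neg]) ht,
    mul_eq_one_comm.1 h.1.1]

theorem norm_le_one (hhat : ∀ v w, hat v *ᵥ w = v ⨯₃ w)
    (h : IsAvgSolution hat gradc p Q) (ht : 0 ≤ t) : ‖Q t‖ ≤ 1 := by
  refine entrywise_sup_norm_bound_of_unitary (mem_unitaryGroup_iff.2 ?_)
  rw [star_eq_conjTranspose, conjTranspose_eq_transpose_of_trivial]
  exact h.mul_transpose_self hhat ht

theorem hasDerivAt_heading (hhat : ∀ v w, hat v *ᵥ w = v ⨯₃ w)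
    (h : IsAvgSolution hat gradc p Q) (ht : 0 ≤ t) :
    HasDerivAt (fun s => Q s *ᵥ e₁)
      ((1 / 4 : ℝ) • ((gradc (p t) ⬝ᵥ Q t *ᵥ e₁) • Q t *ᵥ e₁ - gradc (p t))) t := by
  convert (h.2.2 t ht).matrix_mulVec_const e₁ using 1
  rw [smul_mulVec, ← mulVec_mulVec, hhat,
    mulVec_cross_cross_of_mul_transpose_eq_one (h.mul_transpose_self hhat ht)]
  simp

theorem hasDerivAt_cost (hc : Differentiable ℝ c)
    (hgrad : ∀ x v, fderiv ℝ c x v = gradc x ⬝ᵥ v) (h : IsAvgSolution hat gradc p Q)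
    (ht : 0 ≤ t) : HasDerivAt (fun s => c (p s)) ((gradc (p t) ⬝ᵥ Q t *ᵥ e₁) ^ 2) t := by
  refine ((hc (p t)).hasFDerivAt.comp_hasDerivAt t (h.hasDerivAt_position ht)).congr_deriv ?_
  rw [hgrad, dotProduct_smul, smul_eq_mul, sq]

theorem hasDerivAt_gradient_dotProduct (hgc : Differentiable ℝ gradc)
    (hhat : ∀ v w, hat v *ᵥ w = v ⨯₃ w) (h : IsAvgSolution hat gradc p Q) (ht : 0 ≤ t) :
    HasDerivAt (fun s => gradc (p s) ⬝ᵥ Q s *ᵥ e₁)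
      ((gradc (p t) ⬝ᵥ Q t *ᵥ e₁) * (fderiv ℝ gradc (p t) (Q t *ᵥ e₁) ⬝ᵥ Q t *ᵥ e₁)
        + ((gradc (p t) ⬝ᵥ Q t *ᵥ e₁) ^ 2 - gradc (p t) ⬝ᵥ gradc (p t)) / 4) t := by
  refine (((hgc (p t)).hasFDerivAt.comp_hasDerivAt t (h.hasDerivAt_position ht)).dotProduct
    (h.hasDerivAt_heading hhat ht)).congr_deriv ?_
  simp only [Function.comp_apply, map_smul, smul_dotProduct, dotProduct_smul, dotProduct_sub,
    smul_eq_mul]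
  ring

theorem cost_mono (hc : Differentiable ℝ c) (hgrad : ∀ x v, fderiv ℝ c x v = gradc x ⬝ᵥ v)
    (h : IsAvgSolution hat gradc p Q) {s t : ℝ} (hs : 0 ≤ s) (hst : s ≤ t) :
    c (p s) ≤ c (p t) := by
  have := sub_le_mul_sub_of_hasDerivAt_le (C := 0) (fun t ht => (h.hasDerivAt_cost hc hgrad ht).neg)
    (fun t _ => neg_nonpos.2 (sq_nonneg _)) hs hst
  simp only [Pi.neg_apply, zero_mul] at this
  linarith

theorem exists_sub_cost_lt (hhat : ∀ v w, hat v *ᵥ w = v ⨯₃ w) (hc : Differentiable ℝ c)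
    (hgc : ContDiff ℝ 1 gradc) (hgrad : ∀ x v, fderiv ℝ c x v = gradc x ⬝ᵥ v) {pstar : Fin 3 → ℝ}
    (hcrit : ∀ x, gradc x = 0 → x = pstar) (hmax : ∀ x, c x ≤ c pstar)
    (hradial : Tendsto (fun x => c pstar - c x) (cocompact (Fin 3 → ℝ)) atTop)
    (h : IsAvgSolution hat gradc p Q) {m : ℝ} (hm : 0 < m) :
    ∃ t, 0 ≤ t ∧ c pstar - c (p t) < m := by
  by_contra! hstay
  have hV : Continuous fun x => c pstar - c x := continuous_const.sub hc.continuous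
  set K := {x | c pstar - c x ≤ c pstar - c (p 0)}
  have hK : IsCompact K := isCompact_sublevel_of_tendsto_cocompact hV hradial _
  have hpK : ∀ t, 0 ≤ t → p t ∈ K := fun t ht =>
    show c pstar - c (p t) ≤ _ by linarith [h.cost_mono hc hgrad le_rfl ht]
  have hKQ : IsCompact (K ×ˢ Metric.closedBall (0 : Matrix (Fin 3) (Fin 3) ℝ) 1) :=
    hK.prod (isCompact_closedBall 0 1)
  have hpQ : ∀ t, 0 ≤ t → (p t, Q t) ∈ K ×ˢ Metric.closedBall 0 1 := fun t ht =>
    ⟨hpK t ht, mem_closedBall_zero_iff.2 (h.norm_le_one hhat ht)⟩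
  obtain ⟨P, hP, hPg⟩ := (hK.inter_right (isClosed_le continuous_const hV :
      IsClosed {x | m ≤ c pstar - c x})).exists_forall_le'
      (hgc.continuous.dotProduct hgc.continuous).continuousOn fun x hx => by
    refine lt_of_le_of_ne (Finset.sum_nonneg fun i _ => mul_self_nonneg _) fun h0 => ?_
    have hx2 : m ≤ c pstar - c x := hx.2
    rw [hcrit x (dotProduct_self_eq_zero.1 h0.symm), sub_self] at hx2
    exact hm.not_ge hx2
  obtain ⟨A, hA⟩ := hKQ.exists_bound_of_continuousOn
    (f := fun z => gradc z.1 ⬝ᵥ z.2 *ᵥ e₁)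
    ((hgc.continuous.comp continuous_fst).dotProduct (continuous_snd.matrix_mulVec
      continuous_const)).continuousOn
  obtain ⟨B, hB⟩ := hKQ.exists_bound_of_continuousOn
    (f := fun z => fderiv ℝ gradc z.1 (z.2 *ᵥ e₁) ⬝ᵥ z.2 *ᵥ e₁)
    ((((hgc.continuous_fderiv one_ne_zero).comp continuous_fst).clm_apply
      (continuous_snd.matrix_mulVec continuous_const)).dotProduct
      (continuous_snd.matrix_mulVec continuous_const)).continuousOn
  obtain ⟨t, ht, hlt⟩ := exists_lt_of_hasDerivAt_neg_sq hP
    (fun t ht => (h.hasDerivAt_cost hc hgrad ht).const_sub (c pstar))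
    (fun t ht => h.hasDerivAt_gradient_dotProduct (hgc.differentiable one_ne_zero) hhat ht)
    (fun t _ => sub_nonneg.2 (hmax _)) (fun t ht => (abs_le.1 (hA _ (hpQ t ht))).1)
    (fun t ht => hB _ (hpQ t ht))
  exact (hPg (p t) ⟨hpK t ht, hstay t ht⟩).not_gt hlt

end IsAvgSolution

end Solution

theorem source_seeking_global_asymptotic_stability_general
    (hat : (Fin 3 → ℝ) → Matrix (Fin 3) (Fin 3) ℝ)
    (hhat : ∀ v w : Fin 3 → ℝ, (hat v).mulVec w = v ⨯₃ w)
    (c : (Fin 3 → ℝ) → ℝ) (hc : ContDiff ℝ 3 c)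
    (gradc : (Fin 3 → ℝ) → Fin 3 → ℝ)
    (hgrad : ∀ (x v : Fin 3 → ℝ), fderiv ℝ c x v = gradc x ⬝ᵥ v)
    (pstar : Fin 3 → ℝ)
    (hcrit : ∀ x : Fin 3 → ℝ, gradc x = 0 ↔ x = pstar)
    (hmax : ∀ x : Fin 3 → ℝ, c x ≤ c pstar)
    (hradial : Tendsto (fun x => c pstar - c x) (cocompact (Fin 3 → ℝ)) atTop) :
    (∀ ε : ℝ, 0 < ε → ∃ δ : ℝ, 0 < δ ∧
      ∀ (p : ℝ → Fin 3 → ℝ) (Q : ℝ → Matrix (Fin 3) (Fin 3) ℝ),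
        IsAvgSolution hat gradc p Q → ‖p 0 - pstar‖ < δ →
          ∀ t : ℝ, 0 ≤ t → ‖p t - pstar‖ < ε) ∧
    (∀ (p : ℝ → Fin 3 → ℝ) (Q : ℝ → Matrix (Fin 3) (Fin 3) ℝ),
      IsAvgSolution hat gradc p Q → Tendsto p atTop (nhds pstar)) := by
  have hcd : Differentiable ℝ c := hc.differentiable (by norm_num)
  have hgc : ContDiff ℝ 1 gradc := contDiff_gradient (hc.of_le (by norm_num)) hgrad
  have hV : Continuous fun x => c pstar - c x := continuous_const.sub hc.continuous
  have hpos : ∀ x, x ≠ pstar → 0 < c pstar - c x := fun x hx =>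
    (sub_nonneg.2 (hmax x)).lt_of_ne fun h0 => hx <| (hcrit x).1 <|
      gradient_eq_zero_of_isLocalMax hgrad <| .of_forall fun y => by linarith [hmax y]
  refine ⟨fun ε hε => ?_, fun p Q h U hU => ?_⟩
  · obtain ⟨m, hm, hmU⟩ :=
      exists_pos_sublevel_subset hV hradial hpos (Metric.ball_mem_nhds pstar hε)
    obtain ⟨δ, hδ, hδm⟩ := Metric.continuousAt_iff.1 hV.continuousAt m hm
    refine ⟨δ, hδ, fun p Q h h0 t ht => ?_⟩
    have hV0 := hδm (x := p 0) (by rwa [dist_eq_norm])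
    rw [sub_self, Real.dist_eq, sub_zero] at hV0
    rw [← dist_eq_norm]
    exact hmU _ <| lt_of_le_of_lt (by linarith [h.cost_mono hcd hgrad le_rfl ht])
      ((le_abs_self _).trans_lt hV0)
  · obtain ⟨m, hm, hmU⟩ := exists_pos_sublevel_subset hV hradial hpos hU
    obtain ⟨T, hT, hTm⟩ := h.exists_sub_cost_lt hhat hcd hgc hgrad (fun x => (hcrit x).1) hmax
      hradial hm
    exact Filter.mem_atTop_sets.2 ⟨T, fun t ht =>
      hmU _ (by linarith [h.cost_mono hcd hgrad hT ht])⟩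

/-- Global asymptotic stability of `S = {p*} × SO(3)` for the reduced order averaged
system: Lyapunov stability of the `p`-component about `p*`, and global attractivity
`p(t) → p*`. -/
theorem source_seeking_global_asymptotic_stability
    (hat : (Fin 3 → ℝ) → Matrix (Fin 3) (Fin 3) ℝ)
    (hhat : ∀ v w : Fin 3 → ℝ, (hat v).mulVec w = v ⨯₃ w)
    (c : (Fin 3 → ℝ) → ℝ) (hc : ContDiff ℝ 3 c)
    (gradc : (Fin 3 → ℝ) → Fin 3 → ℝ)
    (hgrad : ∀ (x v : Fin 3 → ℝ), fderiv ℝ c x v = gradc x ⬝ᵥ v)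
    (pstar : Fin 3 → ℝ)
    (hcrit : ∀ x : Fin 3 → ℝ, gradc x = 0 ↔ x = pstar)
    (hmax : ∀ x : Fin 3 → ℝ, c x ≤ c pstar)
    (hradial : Tendsto (fun x => c pstar - c x) (cocompact (Fin 3 → ℝ)) atTop)
    (κ : ℝ) (hκ : 0 < κ)
    (hPL : ∀ x : Fin 3 → ℝ, c pstar - c x ≤ κ * (gradc x ⬝ᵥ gradc x)) :
    (∀ ε : ℝ, 0 < ε → ∃ δ : ℝ, 0 < δ ∧
      ∀ (p : ℝ → Fin 3 → ℝ) (Q : ℝ → Matrix (Fin 3) (Fin 3) ℝ),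
        IsAvgSolution hat gradc p Q → ‖p 0 - pstar‖ < δ →
          ∀ t : ℝ, 0 ≤ t → ‖p t - pstar‖ < ε) ∧
    (∀ (p : ℝ → Fin 3 → ℝ) (Q : ℝ → Matrix (Fin 3) (Fin 3) ℝ),
      IsAvgSolution hat gradc p Q → Tendsto p atTop (nhds pstar)) :=
  source_seeking_global_asymptotic_stability_general hat hhat c hc gradc hgrad pstar hcrit hmax
    hradial
end

section
/- Let f : ℝⁿ × ℝ → ℝⁿ be continuous, T-periodic in its second argument, with ∫_0^T f(x, s) ds = 0 for all x, and Lipschitz in x with constant L on a compact set K, uniformly in s. Let x : [0, τ_f] → K be Lipschitz with constant εM. Then for any interval [a, a+T] ⊆ [0, τ_f], ‖∫_a^{a+T} f(x(s), s) ds‖ ≤ L M T² ε. -/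
/-!
Freeze the slow variable at the left endpoint: `s ↦ f (x a) s` is `T`-periodic with zero mean,
so its integral over `[a, a + T]` vanishes. What remains is the integral of
`f (x s) s - f (x a) s`, which the Lipschitz bound in the first argument controls by
`L ‖x s - x a‖ ≤ L ε M T` pointwise, hence by `L ε M T²` after integrating over one period.
-/

open Set MeasureTheory intervalIntegral

section

variable {E : Type*} [NormedAddCommGroup E] [NormedSpace ℝ E]

theorem Function.Periodic.intervalIntegral_add_eq_zero {g : ℝ → E} {T : ℝ}
    (hg : Function.Periodic g T) (h0 : ∫ s in (0 : ℝ)..T, g s = 0) (a : ℝ) :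
    ∫ s in a..a + T, g s = 0 := by
  simpa [h0] using hg.intervalIntegral_add_eq a 0

theorem norm_intervalIntegral_le_of_norm_sub_le {g h : ℝ → E} {a b C : ℝ}
    (hg : IntervalIntegrable g volume a b) (hh : IntervalIntegrable h volume a b)
    (h0 : ∫ s in a..b, h s = 0) (hC : ∀ s ∈ uIoc a b, ‖g s - h s‖ ≤ C) :
    ‖∫ s in a..b, g s‖ ≤ C * |b - a| := by
  rw [← sub_zero (∫ s in a..b, g s), ← h0, ← integral_sub hg hh]
  exact norm_integral_le_of_norm_le_const hC

theorem norm_intervalIntegral_le_of_frozen {X : Type*} [TopologicalSpace X] {f : X → ℝ → E}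
    (hf : Continuous fun q : X × ℝ => f q.1 q.2) {x : ℝ → X} {a b C : ℝ} (hab : a ≤ b)
    (hx : ContinuousOn x (Icc a b)) (h0 : ∫ s in a..b, f (x a) s = 0)
    (hC : ∀ s ∈ Icc a b, ‖f (x s) s - f (x a) s‖ ≤ C) :
    ‖∫ s in a..b, f (x s) s‖ ≤ C * (b - a) := by
  have hmoving : IntervalIntegrable (fun s => f (x s) s) volume a b :=
    (hf.comp_continuousOn (hx.prodMk continuousOn_id)).intervalIntegrable_of_Icc hab
  have hfrozen : IntervalIntegrable (fun s => f (x a) s) volume a b :=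
    (hf.comp (continuous_const.prodMk continuous_id)).intervalIntegrable _ _
  have hC' : ∀ s ∈ uIoc a b, ‖f (x s) s - f (x a) s‖ ≤ C := fun s hs =>
    hC s (Ioc_subset_Icc_self (uIoc_of_le hab ▸ hs))
  simpa [abs_of_nonneg (sub_nonneg.2 hab)] using
    norm_intervalIntegral_le_of_norm_sub_le hmoving hfrozen h0 hC'

end

theorem per_period_estimate_general {n : ℕ} (f : (Fin n → ℝ) → ℝ → Fin n → ℝ)
    (T : ℝ) (hT : 0 < T)
    (hf : Continuous fun q : (Fin n → ℝ) × ℝ => f q.1 q.2)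
    (hper : ∀ (x : Fin n → ℝ) (s : ℝ), f x (s + T) = f x s)
    (hzero : ∀ x : Fin n → ℝ, ∫ s in (0:ℝ)..T, f x s = 0)
    (K : Set (Fin n → ℝ))
    (L : ℝ) (hL : 0 < L)
    (hLip : ∀ s : ℝ, ∀ x ∈ K, ∀ y ∈ K, ‖f x s - f y s‖ ≤ L * ‖x - y‖)
    (τf ε M : ℝ) (hε : 0 < ε) (hM : 0 < M)
    (x : ℝ → Fin n → ℝ) (hxK : ∀ τ ∈ Icc (0:ℝ) τf, x τ ∈ K)
    (hxLip : ∀ τ₁ ∈ Icc (0:ℝ) τf, ∀ τ₂ ∈ Icc (0:ℝ) τf,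
      ‖x τ₁ - x τ₂‖ ≤ ε * M * |τ₁ - τ₂|) :
    ∀ a : ℝ, 0 ≤ a → a + T ≤ τf →
      ‖∫ s in a..(a + T), f (x s) s‖ ≤ L * M * T ^ 2 * ε := by
  intro a ha haT
  have hsub : Icc a (a + T) ⊆ Icc 0 τf := Icc_subset_Icc ha haT
  have ha_mem : a ∈ Icc 0 τf := hsub (left_mem_Icc.2 (by linarith))
  have hx : ContinuousOn x (Icc 0 τf) :=
    (LipschitzOnWith.of_dist_le' fun s hs t ht => by
      simpa only [dist_eq_norm, Real.norm_eq_abs] using hxLip s hs t ht).continuousOn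
  have hdrift : ∀ s ∈ Icc a (a + T), ‖f (x s) s - f (x a) s‖ ≤ L * (ε * M * T) := by
    intro s hs
    have hsa : |s - a| ≤ T := by rw [abs_of_nonneg (by linarith [hs.1])]; linarith [hs.2]
    calc ‖f (x s) s - f (x a) s‖ ≤ L * ‖x s - x a‖ := hLip s _ (hxK s (hsub hs)) _ (hxK a ha_mem)
      _ ≤ L * (ε * M * |s - a|) := by gcongr; exact hxLip s (hsub hs) a ha_mem
      _ ≤ L * (ε * M * T) := by gcongr
  have hbound := norm_intervalIntegral_le_of_frozen hf (by linarith) (hx.mono hsub)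
    (Function.Periodic.intervalIntegral_add_eq_zero (hper (x a)) (hzero (x a)) a) hdrift
  calc _ ≤ L * (ε * M * T) * (a + T - a) := hbound
    _ = L * M * T ^ 2 * ε := by ring

/-- Per-period averaging estimate: if `f` is continuous, `T`-periodic in `s`, has zero
mean over a period, and is `L`-Lipschitz in `x` on a compact set `K` uniformly in `s`,
and `x : [0,τ_f] → K` is `εM`-Lipschitz, then over any period interval
`[a, a+T] ⊆ [0,τ_f]` one has `‖∫_a^{a+T} f(x(s), s) ds‖ ≤ L M T² ε`. -/
theorem per_period_estimate {n : ℕ} (f : (Fin n → ℝ) → ℝ → Fin n → ℝ)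
    (T : ℝ) (hT : 0 < T)
    (hf : Continuous fun q : (Fin n → ℝ) × ℝ => f q.1 q.2)
    (hper : ∀ (x : Fin n → ℝ) (s : ℝ), f x (s + T) = f x s)
    (hzero : ∀ x : Fin n → ℝ, ∫ s in (0:ℝ)..T, f x s = 0)
    (K : Set (Fin n → ℝ)) (hK : IsCompact K)
    (L : ℝ) (hL : 0 < L)
    (hLip : ∀ s : ℝ, ∀ x ∈ K, ∀ y ∈ K, ‖f x s - f y s‖ ≤ L * ‖x - y‖)
    (τf ε M : ℝ) (hε : 0 < ε) (hM : 0 < M)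
    (x : ℝ → Fin n → ℝ) (hxK : ∀ τ ∈ Icc (0:ℝ) τf, x τ ∈ K)
    (hxLip : ∀ τ₁ ∈ Icc (0:ℝ) τf, ∀ τ₂ ∈ Icc (0:ℝ) τf,
      ‖x τ₁ - x τ₂‖ ≤ ε * M * |τ₁ - τ₂|) :
    ∀ a : ℝ, 0 ≤ a → a + T ≤ τf →
      ‖∫ s in a..(a + T), f (x s) s‖ ≤ L * M * T ^ 2 * ε :=
  per_period_estimate_general f T hT hf hper hzero K L hL hLip τf ε M hε hM x hxK hxLip
end
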